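/- There exists a solvable MPP instance (G, R, x_I, x_G) such that no solution simultaneously attains the minimum total distance and the minimum maximum distance; i.e., every solution whose maximum distance equals the minimum maximum distance over all solutions has total distance strictly greater than the minimum total distance over all solutions. -/

import Mathlib

/-!
Formalization of multi-robot path planning on graphs (MPP).

An MPP instance consists of a connected simple graph `G` on a vertex type `V`,
a finite set of robots (an index type `R`), and injective start/goal
configurations `xI xG : R → V`.  A scheduled path is a map `ℕ → V`.
-/

namespace MPPFormal

variable {V R : Type}

/-- The arrival time of a path `p` with goal `g`: the smallest time `t`
with `p t = g`. -/
noncomputable def arrivalTime (g : V) (p : ℕ → V) : ℕ := sInf {t | p t = g}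

/-- A feasible scheduled path from `s` to `g` in the graph `G`:
it starts at `s`, reaches `g` at some time, stays at `g` forever after the
first time it reaches `g`, and at every time step it either traverses an
edge of `G` or stays put. -/
def FeasiblePath (G : SimpleGraph V) (s g : V) (p : ℕ → V) : Prop :=
  p 0 = s ∧ (∃ t, p t = g) ∧ (∀ t, arrivalTime g p ≤ t → p t = g) ∧
    ∀ t, G.Adj (p t) (p (t + 1)) ∨ p t = p (t + 1)

/-- Two scheduled paths collide if they meet at the same vertex at the same
time, or if they swap along an edge head-on. -/
def Collide (p q : ℕ → V) : Prop :=
  (∃ t, p t = q t) ∨ ∃ t, p t = q (t + 1) ∧ p (t + 1) = q t ∧ p t ≠ p (t + 1)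

/-- The length of a scheduled path: the number of time steps at which it
actually moves. -/
noncomputable def pathLen (p : ℕ → V) : ℕ := Set.ncard {t | p t ≠ p (t + 1)}

/-- A solution to the MPP instance `(G, R, xI, xG)`: a family of pairwise
non-colliding feasible paths, one per robot. -/
def IsSolution (G : SimpleGraph V) (xI xG : R → V) (p : R → ℕ → V) : Prop :=
  (∀ i, FeasiblePath G (xI i) (xG i) (p i)) ∧
    Pairwise fun i j => ¬ Collide (p i) (p j)

/-- `(G, xI, xG)` together with the robot index type `R` forms an MPP
instance: the graph is connected and the start and goal configurations are
injective. -/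
def IsMPPInstance (G : SimpleGraph V) (xI xG : R → V) : Prop :=
  G.Connected ∧ Function.Injective xI ∧ Function.Injective xG

variable [Fintype R]

/-- Total arrival time of a solution. -/
noncomputable def totalTime (xG : R → V) (p : R → ℕ → V) : ℕ :=
  ∑ i, arrivalTime (xG i) (p i)

/-- Makespan (last arrival time) of a solution. -/
noncomputable def makespan (xG : R → V) (p : R → ℕ → V) : ℕ :=
  Finset.univ.sup fun i => arrivalTime (xG i) (p i)

/-- Total distance traveled in a solution. -/
noncomputable def totalDist (p : R → ℕ → V) : ℕ := ∑ i, pathLen (p i)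

/-- Maximum single-robot distance of a solution. -/
noncomputable def maxDist (p : R → ℕ → V) : ℕ :=
  Finset.univ.sup fun i => pathLen (p i)

/-- Minimum total arrival time over all solutions. -/
noncomputable def minTotalTime (G : SimpleGraph V) (xI xG : R → V) : ℕ :=
  sInf {c | ∃ p, IsSolution G xI xG p ∧ totalTime xG p = c}

/-- Minimum makespan over all solutions. -/
noncomputable def minMakespan (G : SimpleGraph V) (xI xG : R → V) : ℕ :=
  sInf {c | ∃ p, IsSolution G xI xG p ∧ makespan xG p = c}

/-- Minimum total distance over all solutions. -/
noncomputable def minTotalDist (G : SimpleGraph V) (xI xG : R → V) : ℕ :=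
  sInf {c | ∃ p, IsSolution G xI xG p ∧ totalDist p = c}

/-- Minimum maximum distance over all solutions. -/
noncomputable def minMaxDist (G : SimpleGraph V) (xI xG : R → V) : ℕ :=
  sInf {c | ∃ p, IsSolution G xI xG p ∧ maxDist p = c}

end MPPFormal

/-
Let robot A go from 0 to 3 and robot B from 2 to 1 on the 7-cycle 0-1-2-3-7-6-5 with a pendant
vertex 4 attached to 2. Sending A the long way round (0-5-6-7-3) while B steps once gives total
distance 5. Maximum distance 3 is attainable (A takes 0-1-2-3 while B dodges into 4 and back),
but then A has to cross the edge 1-2. Since a feasible path p from s to g satisfies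
dist s (p t) + dist (p t) g ≤ len p, a robot B moving at most twice never leaves {1, 2}, so it
would meet A or swap with it on that edge. Hence B moves three times and the total is 6.
-/

theorem SimpleGraph.Walk.apply_le_apply_add_length {V : Type*} {G : SimpleGraph V} {f : V → ℕ}
    (hf : ∀ u v, G.Adj u v → f v ≤ f u + 1) : ∀ {u v : V} (w : G.Walk u v), f v ≤ f u + w.length
  | _, _, .nil => by simp
  | _, _, .cons h w => by
    have := hf _ _ h
    have := apply_le_apply_add_length hf w
    rw [SimpleGraph.Walk.length_cons]
    omega

theorem SimpleGraph.Reachable.apply_le_apply_add_dist {V : Type*} {G : SimpleGraph V}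
    {f : V → ℕ} (hf : ∀ u v, G.Adj u v → f v ≤ f u + 1) {u v : V} (h : G.Reachable u v) :
    f v ≤ f u + G.dist u v := by
  obtain ⟨w, hw⟩ := h.exists_walk_length_eq_dist
  exact hw ▸ w.apply_le_apply_add_length hf

namespace MPPFormal

variable {V : Type} {G : SimpleGraph V} {s g : V}

theorem Collide.symm {p q : ℕ → V} (h : Collide p q) : Collide q p := by
  rcases h with ⟨t, h⟩ | ⟨t, h₁, h₂, hne⟩
  · exact .inl ⟨t, h.symm⟩
  · exact .inr ⟨t, h₂.symm, h₁.symm, fun he => hne (h₁.trans (he.symm.trans h₂.symm))⟩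

theorem collide_comm {p q : ℕ → V} : Collide p q ↔ Collide q p :=
  ⟨Collide.symm, Collide.symm⟩

theorem isSolution_fin_two_iff {xI xG : Fin 2 → V} {p : Fin 2 → ℕ → V} :
    IsSolution G xI xG p ↔ FeasiblePath G (xI 0) (xG 0) (p 0) ∧
      FeasiblePath G (xI 1) (xG 1) (p 1) ∧ ¬ Collide (p 0) (p 1) := by
  simp [IsSolution, Pairwise, Fin.forall_fin_two, collide_comm (p := p 1), and_assoc]

theorem totalDist_fin_two (p : Fin 2 → ℕ → V) :
    totalDist p = pathLen (p 0) + pathLen (p 1) :=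
  Fin.sum_univ_two _

theorem maxDist_fin_two (p : Fin 2 → ℕ → V) :
    maxDist p = max (pathLen (p 0)) (pathLen (p 1)) := by
  simp [maxDist, Fin.univ_succ]

section Moves

variable [DecidableEq V]

def movesIn (p : ℕ → V) (a b : ℕ) : ℕ :=
  ((Finset.Ico a b).filter fun t => p t ≠ p (t + 1)).card

theorem movesIn_add (p : ℕ → V) {a b c : ℕ} (hab : a ≤ b) (hbc : b ≤ c) :
    movesIn p a b + movesIn p b c = movesIn p a c := by
  simp only [movesIn, Finset.card_filter]
  exact Finset.sum_Ico_consecutive _ hab hbc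

theorem pathLen_eq_movesIn {p : ℕ → V} {T : ℕ} (hT : ∀ t, T ≤ t → p t = p T) :
    pathLen p = movesIn p 0 T := by
  have hmoves : {t | p t ≠ p (t + 1)} = ↑((Finset.Ico 0 T).filter fun t => p t ≠ p (t + 1)) := by
    ext t
    simp only [Set.mem_ofPred_eq, Finset.coe_filter, Finset.mem_Ico, Nat.zero_le, true_and]
    refine ⟨fun hne => ?_, And.right⟩
    refine ⟨lt_of_not_ge fun hTt => hne ?_, hne⟩
    rw [hT t hTt, hT (t + 1) (by omega)]
  rw [pathLen, hmoves, Set.ncard_coe_finset, movesIn]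

theorem exists_walk_length_le_movesIn {p : ℕ → V}
    (hstep : ∀ t, G.Adj (p t) (p (t + 1)) ∨ p t = p (t + 1)) {a b : ℕ} (hab : a ≤ b) :
    ∃ w : G.Walk (p a) (p b), w.length ≤ movesIn p a b := by
  induction b, hab using Nat.le_induction with
  | base => exact ⟨.nil, Nat.zero_le _⟩
  | succ b hab ih =>
    obtain ⟨w, hw⟩ := ih
    rw [← movesIn_add p hab b.le_succ]
    rcases hstep b with hadj | heq
    · refine ⟨w.concat hadj, ?_⟩
      simpa [movesIn, Finset.filter_singleton, hadj.ne] using hw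
    · refine ⟨w.copy rfl heq, ?_⟩
      simpa using hw.trans (Nat.le_add_right _ _)

theorem pathLen_getD (l : List V) (g : V) :
    pathLen (l.getD · g) = movesIn (l.getD · g) 0 l.length :=
  pathLen_eq_movesIn fun t ht => by
    rw [List.getD_eq_default _ _ ht, List.getD_eq_default _ _ le_rfl]

end Moves

theorem FeasiblePath.dist_add_dist_le_pathLen {p : ℕ → V} (hf : FeasiblePath G s g p) (t : ℕ) :
    G.dist s (p t) + G.dist (p t) g ≤ pathLen p := by
  classical
  obtain ⟨rfl, -, harr, hstep⟩ := hf
  set T := max t (arrivalTime g p)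
  have hT : ∀ u, T ≤ u → p u = g := fun u hu => harr u (le_of_max_le_right hu)
  obtain ⟨w₁, hw₁⟩ := exists_walk_length_le_movesIn (G := G) hstep (Nat.zero_le t)
  obtain ⟨w₂, hw₂⟩ := exists_walk_length_le_movesIn (G := G) hstep (le_max_left t (arrivalTime g p))
  calc G.dist (p 0) (p t) + G.dist (p t) g
      ≤ movesIn p 0 t + movesIn p t T := by
        rw [← hT T le_rfl]
        exact add_le_add ((SimpleGraph.dist_le w₁).trans hw₁) ((SimpleGraph.dist_le w₂).trans hw₂)
    _ = movesIn p 0 T := movesIn_add p (Nat.zero_le t) (le_max_left _ _)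
    _ = pathLen p := (pathLen_eq_movesIn fun u hu => (hT u hu).trans (hT T le_rfl).symm).symm

theorem FeasiblePath.of_getD {l : List V} (h₀ : l.getD 0 g = s) (hg : g ∉ l)
    (hstep : ∀ t < l.length, G.Adj (l.getD t g) (l.getD (t + 1) g) ∨
      l.getD t g = l.getD (t + 1) g) :
    FeasiblePath G s g (l.getD · g) := by
  have hgoal : ∀ t, l.getD t g = g ↔ l.length ≤ t := fun t => by
    refine ⟨fun h => le_of_not_gt fun ht => hg ?_, List.getD_eq_default _ _⟩
    rw [List.getD_eq_getElem _ _ ht] at h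
    exact h ▸ List.getElem_mem ht
  refine ⟨h₀, ⟨l.length, (hgoal _).2 le_rfl⟩, fun t ht => (hgoal t).2 ?_, fun t => ?_⟩
  · exact ((hgoal _).1 (Nat.sInf_mem (s := {t | l.getD t g = g}) ⟨_, (hgoal _).2 le_rfl⟩)).trans ht
  · rcases lt_or_ge t l.length with ht | ht
    · exact hstep t ht
    · exact .inr (((hgoal t).2 ht).trans ((hgoal (t + 1)).2 (by omega)).symm)

theorem not_collide_getD {l m : List V} {g₁ g₂ : V}
    (hmeet : ∀ t ≤ max l.length m.length, l.getD t g₁ ≠ m.getD t g₂)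
    (hswap : ∀ t < max l.length m.length,
      ¬ (l.getD t g₁ = m.getD (t + 1) g₂ ∧ l.getD (t + 1) g₁ = m.getD t g₂)) :
    ¬ Collide (l.getD · g₁) (m.getD · g₂) := by
  set T := max l.length m.length
  have hconst : ∀ (k : List V) (d : V), k.length ≤ T → ∀ t, T ≤ t → k.getD t d = k.getD T d :=
    fun k d hk t ht => by rw [List.getD_eq_default _ _ (hk.trans ht), List.getD_eq_default _ _ hk]
  rintro (⟨t, hmt⟩ | ⟨t, h₁, h₂, hne⟩)
  · rcases le_or_gt t T with ht | ht
    · exact hmeet t ht hmt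
    · dsimp only at hmt
      rw [hconst l g₁ (le_max_left _ _) t ht.le, hconst m g₂ (le_max_right _ _) t ht.le] at hmt
      exact hmeet T le_rfl hmt
  · rcases lt_or_ge t T with ht | ht
    · exact hswap t ht ⟨h₁, h₂⟩
    · exact hne ((hconst l g₁ (le_max_left _ _) t ht).trans
        (hconst l g₁ (le_max_left _ _) (t + 1) (by omega)).symm)

open SimpleGraph

def paretoEdges : List (Fin 8 × Fin 8) :=
  [(0, 1), (1, 2), (2, 3), (2, 4), (0, 5), (5, 6), (6, 7), (7, 3)]

def paretoGraph : SimpleGraph (Fin 8) := fromRel fun a b => (a, b) ∈ paretoEdges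

instance : DecidableRel paretoGraph.Adj := fun a b =>
  inferInstanceAs (Decidable (a ≠ b ∧ ((a, b) ∈ paretoEdges ∨ (b, a) ∈ paretoEdges)))

theorem paretoGraph_connected : paretoGraph.Connected :=
  (pathGraph_connected 7).map
    ⟨![4, 2, 1, 0, 5, 6, 7, 3], fun {a b} h => by
      rw [pathGraph_adj] at h
      revert a b
      decide⟩
    (by decide)

/-- Breadth-first distances in `paretoGraph`. -/
def paretoDist : Fin 8 → Fin 8 → ℕ :=
  ![![0, 1, 2, 3, 3, 1, 2, 3],
    ![1, 0, 1, 2, 2, 2, 3, 3],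
    ![2, 1, 0, 1, 1, 3, 3, 2],
    ![3, 2, 1, 0, 2, 3, 2, 1],
    ![3, 2, 1, 2, 0, 4, 4, 3],
    ![1, 2, 3, 3, 4, 0, 1, 2],
    ![2, 3, 3, 2, 4, 1, 0, 1],
    ![3, 3, 2, 1, 3, 2, 1, 0]]

theorem paretoDist_le_dist (u v : Fin 8) : paretoDist u v ≤ paretoGraph.dist u v := by
  have hlip : ∀ a b, paretoGraph.Adj a b → paretoDist u b ≤ paretoDist u a + 1 := by
    revert u; decide
  have hself : paretoDist u u = 0 := by revert u; decide
  simpa [hself] using (paretoGraph_connected u v).apply_le_apply_add_dist hlip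

theorem paretoDist_add_le (s g v : Fin 8) :
    paretoDist s v + paretoDist g v ≤ paretoGraph.dist s v + paretoGraph.dist v g := by
  rw [SimpleGraph.dist_comm (u := v)]
  exact add_le_add (paretoDist_le_dist s v) (paretoDist_le_dist g v)

theorem FeasiblePath.three_le_pathLen {p : ℕ → Fin 8} (hf : FeasiblePath paretoGraph 0 3 p) :
    3 ≤ pathLen p :=
  calc 3 = paretoDist 0 3 := rfl
    _ ≤ paretoGraph.dist 0 3 := paretoDist_le_dist 0 3
    _ ≤ paretoGraph.dist 0 (p 0) + paretoGraph.dist (p 0) 3 := by rw [hf.1]; exact le_add_self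
    _ ≤ pathLen p := hf.dist_add_dist_le_pathLen 0

theorem FeasiblePath.exists_cross_one_two {p : ℕ → Fin 8} (hf : FeasiblePath paretoGraph 0 3 p)
    (hlen : pathLen p ≤ 3) : ∃ b, p b = 1 ∧ p (b + 1) = 2 := by
  have hconf : ∀ v, paretoDist 0 v + paretoDist 3 v ≤ 3 → v ≤ 3 := by decide
  have hcross : ∀ u v : Fin 8, ¬ 2 ≤ u → 2 ≤ v → v ≤ 3 →
      (paretoGraph.Adj u v ∨ u = v) → u = 1 ∧ v = 2 := by decide
  obtain ⟨b, hb, hb₁⟩ := Nat.exists_not_and_succ_of_not_zero_of_exists (p := fun t => 2 ≤ p t)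
    (by simp [hf.1]) (hf.2.1.imp fun t ht => by simp [ht])
  exact ⟨b, hcross _ _ hb hb₁ (hconf _ (((paretoDist_add_le 0 3 _).trans
    (hf.dist_add_dist_le_pathLen (b + 1))).trans hlen)) (hf.2.2.2 b)⟩

theorem FeasiblePath.eq_one_or_eq_two {q : ℕ → Fin 8} (hf : FeasiblePath paretoGraph 2 1 q)
    (hlen : pathLen q ≤ 2) (t : ℕ) : q t = 1 ∨ q t = 2 := by
  have hconf : ∀ v, paretoDist 2 v + paretoDist 1 v ≤ 2 → v = 1 ∨ v = 2 := by decide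
  exact hconf _ (((paretoDist_add_le 2 1 _).trans (hf.dist_add_dist_le_pathLen t)).trans hlen)

theorem three_le_pathLen_of_not_collide {p q : ℕ → Fin 8} (hp : FeasiblePath paretoGraph 0 3 p)
    (hq : FeasiblePath paretoGraph 2 1 q) (hcol : ¬ Collide p q) (hlen : pathLen p ≤ 3) :
    3 ≤ pathLen q := by
  by_contra! hq_len
  obtain ⟨b, hb, hb₁⟩ := hp.exists_cross_one_two hlen
  have hqb : q b = 2 := (hq.eq_one_or_eq_two (by omega) b).resolve_left
    fun h => hcol (.inl ⟨b, hb.trans h.symm⟩)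
  have hqb₁ : q (b + 1) = 1 := (hq.eq_one_or_eq_two (by omega) (b + 1)).resolve_right
    fun h => hcol (.inl ⟨b + 1, hb₁.trans h.symm⟩)
  exact hcol (.inr ⟨b, by rw [hb, hqb₁], by rw [hb₁, hqb], by rw [hb, hb₁]; decide⟩)

def paretoStart : Fin 2 → Fin 8 := ![0, 2]

def paretoGoal : Fin 2 → Fin 8 := ![3, 1]

def longDetourSolution : Fin 2 → ℕ → Fin 8 :=
  ![([0, 5, 6, 7].getD · 3), ([2].getD · 1)]

def dodgeSolution : Fin 2 → ℕ → Fin 8 :=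
  ![([0, 1, 2].getD · 3), ([2, 4, 4, 2].getD · 1)]

theorem isSolution_longDetourSolution :
    IsSolution paretoGraph paretoStart paretoGoal longDetourSolution :=
  isSolution_fin_two_iff.2 ⟨.of_getD rfl (by decide) (by decide),
    .of_getD rfl (by decide) (by decide), not_collide_getD (by decide) (by decide)⟩

theorem isSolution_dodgeSolution :
    IsSolution paretoGraph paretoStart paretoGoal dodgeSolution :=
  isSolution_fin_two_iff.2 ⟨.of_getD rfl (by decide) (by decide),
    .of_getD rfl (by decide) (by decide), not_collide_getD (by decide) (by decide)⟩

theorem totalDist_longDetourSolution : totalDist longDetourSolution = 5 := by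
  rw [totalDist_fin_two]
  simp only [longDetourSolution, Matrix.cons_val_zero, Matrix.cons_val_one, pathLen_getD]
  decide

theorem maxDist_dodgeSolution : maxDist dodgeSolution = 3 := by
  rw [maxDist_fin_two]
  simp only [dodgeSolution, Matrix.cons_val_zero, Matrix.cons_val_one, pathLen_getD]
  decide

/-- There exists a solvable MPP instance such that every solution attaining
the minimum maximum distance has total distance strictly greater than the
minimum total distance. -/
theorem pareto_totalDist_maxDist :
    ∃ (k : ℕ) (V : Type) (G : SimpleGraph V) (xI xG : Fin k → V),
      IsMPPInstance G xI xG ∧ (∃ p, IsSolution G xI xG p) ∧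
      ∀ p, IsSolution G xI xG p → maxDist p = minMaxDist G xI xG →
        minTotalDist G xI xG < totalDist p := by
  refine ⟨2, Fin 8, paretoGraph, paretoStart, paretoGoal,
    ⟨paretoGraph_connected, by decide, by decide⟩, ⟨_, isSolution_longDetourSolution⟩,
    fun p hp hmax => ?_⟩
  obtain ⟨hp₀, hp₁, hcol⟩ := isSolution_fin_two_iff.1 hp
  have hminTotal : minTotalDist paretoGraph paretoStart paretoGoal ≤ 5 :=
    Nat.sInf_le ⟨_, isSolution_longDetourSolution, totalDist_longDetourSolution⟩
  have hminMax : minMaxDist paretoGraph paretoStart paretoGoal ≤ 3 :=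
    Nat.sInf_le ⟨_, isSolution_dodgeSolution, maxDist_dodgeSolution⟩
  have hlen₀ : pathLen (p 0) ≤ 3 := by
    rw [maxDist_fin_two] at hmax
    omega
  have hlenA : 3 ≤ pathLen (p 0) := hp₀.three_le_pathLen
  have hlenB : 3 ≤ pathLen (p 1) := three_le_pathLen_of_not_collide hp₀ hp₁ hcol hlen₀
  rw [totalDist_fin_two]
  omega

end MPPFormal
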